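/- arXiv:2207.02828 — 3 statements merged into one kernel-verified Lean document; each statement's English description precedes it below -/
import Mathlib

section
/- Let (g, D) be an axial pair for an action of G on a nonempty set X. For h ∈ G, let m(h) denote the minimal m ∈ ℕ such that for every w ∈ G with hwD unbounded, X = wD_{[-m,m]} ∪ gⁿD_{[-m,m]} for some n ∈ ℤ, where D_{[a,b]} = ∪_{i=a}^{b} gⁱD. Then m is subadditive: m(h₁h₂) ≤ m(h₁) + m(h₂) for all h₁, h₂ ∈ G. -/
open Pointwise

section AxialDefs

variable {G : Type*} [Group G] {X : Type*} [MulAction G X]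

/-- A subset of `X` is *bounded* (w.r.t. `g` and the fundamental domain `D`)
if it is contained in a finite union of translates `g^i • D`. -/
def Bdd (g : G) (D : Set X) (B : Set X) : Prop :=
  ∃ s : Finset ℤ, B ⊆ ⋃ i ∈ s, (g ^ i) • D

/-- An element is *tame* if it translates bounded sets to bounded sets. -/
def Tame (g : G) (D : Set X) (t : G) : Prop :=
  ∀ B : Set X, Bdd g D B → Bdd g D (t • B)

/-- `D` is a fundamental domain for the action of `⟨g⟩`: `X` is the disjoint
union of the translates `g^n • D`. -/
def FundDom (g : G) (D : Set X) : Prop :=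
  ∀ x : X, ∃! n : ℤ, x ∈ (g ^ n) • D

/-- `(g, D)` is an *axial pair*. -/
def AxialPair (g : G) (D : Set X) : Prop :=
  FundDom g D ∧
  {t : G | Tame g D t ∧ (t • D ∩ D).Nonempty}.Finite ∧
  ∀ h : G, ∃ B : Set X, Bdd g D B ∧
    ∀ w : G, ¬ Bdd g D ((h * w) • D) →
      ∃ n : ℤ, w • B ∪ (g ^ n) • B = Set.univ

/-- The interval `D_{[a,b]} = ∪_{i=a}^{b} g^i • D`. -/
def Dint (g : G) (D : Set X) (a b : ℤ) : Set X :=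
  ⋃ i ∈ Set.Icc a b, (g ^ i) • D

/-- `m` witnesses Axiom 2 (in the interval form (2')) for `h`. -/
def mOK (g : G) (D : Set X) (h : G) (m : ℕ) : Prop :=
  ∀ w : G, ¬ Bdd g D ((h * w) • D) →
    ∃ n : ℤ, w • Dint g D (-(m : ℤ)) (m : ℤ) ∪ (g ^ n) • Dint g D (-(m : ℤ)) (m : ℤ) = Set.univ

/-- `m(h)`: the minimal `m` as in Axiom (2'). -/
noncomputable def mval (g : G) (D : Set X) (h : G) : ℕ :=
  sInf {m : ℕ | mOK g D h m}

/-- `I(w) = {i ∈ ℤ : w·(gⁱD) is unbounded}`. -/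
def Iset (g : G) (D : Set X) (w : G) : Set ℤ :=
  {i : ℤ | ¬ Bdd g D ((w * g ^ i) • D)}

/-- The wilderness center `i(w) = ⌊(min I(w) + max I(w))/2⌋`. -/
noncomputable def ic (g : G) (D : Set X) (w : G) : ℤ :=
  Int.fdiv (sInf (Iset g D w) + sSup (Iset g D w)) 2

end AxialDefs

section Helpers

variable {G : Type*} [Group G] {X : Type*} [MulAction G X]

lemma bdd_mono {g : G} {D B B' : Set X} (h : Bdd g D B') (hsub : B ⊆ B') :
    Bdd g D B := by
  obtain ⟨s, hs⟩ := h
  exact ⟨s, hsub.trans hs⟩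

lemma bdd_union {g : G} {D B B' : Set X} (h : Bdd g D B) (h' : Bdd g D B') :
    Bdd g D (B ∪ B') := by
  obtain ⟨s, hs⟩ := h
  obtain ⟨s', hs'⟩ := h'
  refine ⟨s ∪ s', Set.union_subset (hs.trans ?_) (hs'.trans ?_)⟩
  · intro x hx
    simp only [Set.mem_iUnion, Finset.mem_union] at hx ⊢
    obtain ⟨i, hi, hx⟩ := hx
    exact ⟨i, Or.inl hi, hx⟩
  · intro x hx
    simp only [Set.mem_iUnion, Finset.mem_union] at hx ⊢
    obtain ⟨i, hi, hx⟩ := hx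
    exact ⟨i, Or.inr hi, hx⟩

lemma dint_mono (g : G) (D : Set X) {a b a' b' : ℤ} (h1 : a' ≤ a) (h2 : b ≤ b') :
    Dint g D a b ⊆ Dint g D a' b' := by
  intro x hx
  simp only [Dint, Set.mem_iUnion, Set.mem_Icc] at *
  obtain ⟨i, hi, hx⟩ := hx
  exact ⟨i, ⟨by omega, by omega⟩, hx⟩

lemma bdd_dint (g : G) (D : Set X) (a b : ℤ) : Bdd g D (Dint g D a b) := by
  refine ⟨Finset.Icc a b, ?_⟩
  intro x hx
  simp only [Dint, Set.mem_iUnion, Set.mem_Icc] at hx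
  obtain ⟨i, hi, hx⟩ := hx
  simp only [Set.mem_iUnion, Finset.mem_Icc]
  exact ⟨i, hi, hx⟩

lemma pow_smul_dint (g : G) (D : Set X) (n a b : ℤ) :
    (g ^ n) • Dint g D a b = Dint g D (a + n) (b + n) := by
  ext x
  simp only [Dint, Set.mem_smul_set_iff_inv_smul_mem, Set.mem_iUnion, Set.mem_Icc]
  constructor
  · rintro ⟨i, hi, hx⟩
    refine ⟨n + i, by omega, ?_⟩
    rwa [smul_smul, ← mul_inv_rev, ← zpow_add] at hx
  · rintro ⟨j, hj, hx⟩
    refine ⟨j - n, by omega, ?_⟩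
    rw [smul_smul, ← mul_inv_rev, ← zpow_add]
    have : n + (j - n) = j := by ring
    rwa [this]

lemma mOK_exists {g : G} {D : Set X} (hax : AxialPair g D) (h : G) :
    ∃ m, mOK g D h m := by
  obtain ⟨B, ⟨s, hBs⟩, hB⟩ := hax.2.2 h
  refine ⟨s.sup (fun i => i.natAbs), fun w hw => ?_⟩
  set m : ℕ := s.sup (fun i => i.natAbs) with hm
  have hsub : B ⊆ Dint g D (-(m : ℤ)) (m : ℤ) := by
    intro x hx
    have hx' := hBs hx
    simp only [Set.mem_iUnion] at hx'
    obtain ⟨i, hi, hx'⟩ := hx'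
    have hle : i.natAbs ≤ m := Finset.le_sup hi
    simp only [Dint, Set.mem_iUnion, Set.mem_Icc]
    exact ⟨i, ⟨by omega, by omega⟩, hx'⟩
  obtain ⟨n, hn⟩ := hB w hw
  refine ⟨n, Set.eq_univ_of_univ_subset ?_⟩
  rw [← hn]
  exact Set.union_subset_union (Set.smul_set_mono hsub) (Set.smul_set_mono hsub)

end Helpers

/-- the function `m` is subadditive. -/
theorem mval_subadditive {G : Type*} [Group G] {X : Type*} [MulAction G X]
    [Nonempty X] (g : G) (D : Set X) (hax : AxialPair g D) (h₁ h₂ : G) :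
    mval g D (h₁ * h₂) ≤ mval g D h₁ + mval g D h₂ := by
  classical
  have h1 : mOK g D h₁ (mval g D h₁) := Nat.sInf_mem (mOK_exists hax h₁)
  have h2 : mOK g D h₂ (mval g D h₂) := Nat.sInf_mem (mOK_exists hax h₂)
  set m₁ := mval g D h₁ with hm₁
  set m₂ := mval g D h₂ with hm₂
  apply Nat.sInf_le
  show mOK g D (h₁ * h₂) (m₁ + m₂)
  intro w hw
  have hw' : ¬ Bdd g D ((h₁ * (h₂ * w)) • D) := by rwa [← mul_assoc]
  obtain ⟨n₁, hn₁⟩ := h1 (h₂ * w) hw'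
  by_cases hcase : ∃ i ∈ Set.Icc (-(m₁ : ℤ)) (m₁ : ℤ), ¬ Bdd g D ((h₂ * (w * g ^ i)) • D)
  · obtain ⟨i, hi, hib⟩ := hcase
    simp only [Set.mem_Icc] at hi
    obtain ⟨n₂, hn₂⟩ := h2 (w * g ^ i) hib
    refine ⟨n₂, Set.eq_univ_of_univ_subset ?_⟩
    rw [← hn₂]
    apply Set.union_subset_union
    · rw [mul_smul, pow_smul_dint]
      apply Set.smul_set_mono
      exact dint_mono g D (by push_cast; omega) (by push_cast; omega)
    · apply Set.smul_set_mono
      exact dint_mono g D (by push_cast; omega) (by push_cast; omega)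
  · push_neg at hcase
    exfalso
    apply hw
    have hbdd1 : Bdd g D ((h₂ * w) • Dint g D (-(m₁ : ℤ)) (m₁ : ℤ)) := by
      choose s hs using hcase
      refine ⟨(Finset.Icc (-(m₁ : ℤ)) (m₁ : ℤ)).attach.biUnion
        (fun i => s i.1 (Set.mem_Icc.2 (Finset.mem_Icc.1 i.2))), ?_⟩
      intro x hx
      rw [Set.mem_smul_set_iff_inv_smul_mem] at hx
      simp only [Dint, Set.mem_iUnion, Set.mem_Icc,
        Set.mem_smul_set_iff_inv_smul_mem] at hx
      obtain ⟨i, hi, hx⟩ := hx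
      have hx' : x ∈ (h₂ * (w * g ^ i)) • D := by
        rw [Set.mem_smul_set_iff_inv_smul_mem, smul_smul] at *
        have : (g ^ i)⁻¹ * (h₂ * w)⁻¹ = (h₂ * (w * g ^ i))⁻¹ := by group
        rwa [this] at hx
      have := hs i hi hx'
      simp only [Set.mem_iUnion, Finset.mem_biUnion, Finset.mem_attach] at this ⊢
      obtain ⟨j, hj, hxj⟩ := this
      exact ⟨j, ⟨⟨i, by simpa using hi⟩, trivial, hj⟩, hxj⟩
    have hbdd2 : Bdd g D ((g ^ n₁) • Dint g D (-(m₁ : ℤ)) (m₁ : ℤ)) := by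
      rw [pow_smul_dint]
      exact bdd_dint g D _ _
    have hX : Bdd g D (Set.univ : Set X) := by
      rw [← hn₁]
      exact bdd_union hbdd1 hbdd2
    exact bdd_mono hX (Set.subset_univ _)
end

section
/- Let (g, D) be an axial pair for an action of G on X. Then the subgroup T of tame elements is virtually cyclic: the cyclic subgroup ⟨g⟩ has finite index in T. -/
open Pointwise

/-- the subgroup of tame elements is virtually cyclic: `⟨g⟩` has finite
index in `T`, i.e. `T` is covered by finitely many cosets `f⟨g⟩`. -/
theorem tame_virtually_cyclic {G : Type*} [Group G] {X : Type*} [MulAction G X]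
    [Nonempty X] (g : G) (D : Set X) (hax : AxialPair g D) :
    ∃ F : Finset G, ∀ t : G, Tame g D t → ∃ f ∈ F, ∃ n : ℤ, t = f * g ^ n := by
  obtain ⟨hfd, hfin, -⟩ := hax
  obtain ⟨x⟩ := ‹Nonempty X›
  obtain ⟨n0, hx0, -⟩ := hfd x
  obtain ⟨d, hd, -⟩ := Set.mem_smul_set.mp hx0
  refine ⟨hfin.toFinset, fun t ht => ?_⟩
  obtain ⟨n, hn, -⟩ := hfd (t⁻¹ • d)
  obtain ⟨e, he, hed⟩ := Set.mem_smul_set.mp hn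
  refine ⟨t * g ^ n, ?_, -n, by group⟩
  rw [Set.Finite.mem_toFinset]
  refine ⟨?_, d, ⟨e, he, by show (t * g ^ n) • e = d; rw [mul_smul, hed, smul_inv_smul]⟩, hd⟩
  intro B hB
  rw [mul_smul]
  apply ht
  obtain ⟨s, hs⟩ := hB
  refine ⟨s.image (n + ·), fun y hy => ?_⟩
  obtain ⟨b, hb, rfl⟩ := Set.mem_smul_set.mp hy
  obtain ⟨i, hi, hbi⟩ := Set.mem_iUnion₂.mp (hs hb)
  refine Set.mem_iUnion₂.mpr ⟨n + i, Finset.mem_image_of_mem _ hi, ?_⟩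
  have : (g ^ n) • b ∈ (g ^ n) • (g ^ i) • D := Set.smul_mem_smul_set hbi
  rwa [smul_smul, ← zpow_add] at this
end

section
/- Let (g, D) be an axial pair for an action of G on X with M = m(e). If u, v, and u⁻¹v are all wild elements, then min{|i(u) − i(v⁻¹u)|, |i(v) − i(u⁻¹v)|} ≤ 5M. -/
open Pointwise

section Aux

variable {G : Type*} [Group G] {X : Type*} [MulAction G X] {g : G} {D : Set X}

lemma Bdd.mono {B C : Set X} (h : Bdd g D C) (hBC : B ⊆ C) : Bdd g D B := by
  obtain ⟨s, hs⟩ := h; exact ⟨s, hBC.trans hs⟩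

lemma bdd_Dint (a b : ℤ) : Bdd g D (Dint g D a b) := by
  refine ⟨Finset.Icc a b, fun x hx => ?_⟩
  simp only [Dint, Set.mem_iUnion, Set.mem_Icc] at hx
  obtain ⟨i, hi, hx⟩ := hx
  exact Set.mem_iUnion₂.mpr ⟨i, by simp only [Finset.mem_Icc]; omega, hx⟩

lemma Bdd.union {B C : Set X} (hB : Bdd g D B) (hC : Bdd g D C) : Bdd g D (B ∪ C) := by
  obtain ⟨s, hs⟩ := hB; obtain ⟨t, ht⟩ := hC
  refine ⟨s ∪ t, Set.union_subset (hs.trans ?_) (ht.trans ?_)⟩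
  · intro x hx
    obtain ⟨i, hi, hx⟩ := Set.mem_iUnion₂.mp hx
    exact Set.mem_iUnion₂.mpr ⟨i, Finset.mem_union_left _ hi, hx⟩
  · intro x hx
    obtain ⟨i, hi, hx⟩ := Set.mem_iUnion₂.mp hx
    exact Set.mem_iUnion₂.mpr ⟨i, Finset.mem_union_right _ hi, hx⟩

lemma bdd_finset_biUnion {s : Finset ℤ} {f : ℤ → Set X}
    (h : ∀ i ∈ s, Bdd g D (f i)) : Bdd g D (⋃ i ∈ s, f i) := by
  classical
  induction s using Finset.induction with
  | empty => exact ⟨∅, by simp⟩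
  | @insert a s hni ih =>
    rw [Finset.set_biUnion_insert]
    exact (h a (by simp)).union (ih fun i hi => h i (by simp [hi]))

lemma bdd_iUnion_Icc {a b : ℤ} {f : ℤ → Set X}
    (h : ∀ i ∈ Set.Icc a b, Bdd g D (f i)) : Bdd g D (⋃ i ∈ Set.Icc a b, f i) := by
  have : (⋃ i ∈ Set.Icc a b, f i) = ⋃ i ∈ Finset.Icc a b, f i := by
    ext x; simp [Set.mem_Icc, Finset.mem_Icc]
  rw [this]
  exact bdd_finset_biUnion fun i hi => h i (by simpa [Set.mem_Icc, Finset.mem_Icc] using hi)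

lemma smul_Dint (t : G) (a b : ℤ) :
    t • Dint g D a b = ⋃ i ∈ Set.Icc a b, (t * g ^ i) • D := by
  simp only [Dint, Set.smul_set_iUnion₂, mul_smul]

lemma pow_smul_Dint (k a b : ℤ) :
    (g ^ k) • Dint g D a b = Dint g D (a + k) (b + k) := by
  rw [smul_Dint]
  ext x
  simp only [Dint, Set.mem_iUnion, Set.mem_Icc]
  constructor
  · rintro ⟨i, ⟨h1, h2⟩, hx⟩
    refine ⟨i + k, ⟨by omega, by omega⟩, ?_⟩
    have hgi : g ^ (i + k) = g ^ k * g ^ i := by rw [add_comm, zpow_add]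
    rwa [hgi]
  · rintro ⟨j, ⟨h1, h2⟩, hx⟩
    refine ⟨j - k, ⟨by omega, by omega⟩, ?_⟩
    have hgj : g ^ k * g ^ (j - k) = g ^ j := by rw [← zpow_add]; congr 1; omega
    rwa [hgj]

lemma Dint_mono {a b a' b' : ℤ} (h1 : a' ≤ a) (h2 : b ≤ b') :
    Dint g D a b ⊆ Dint g D a' b' := by
  apply Set.biUnion_subset_biUnion_left
  exact Set.Icc_subset_Icc h1 h2

lemma fd_disj (hfd : FundDom g D) {i j : ℤ} (hij : i ≠ j) {x : X}
    (hi : x ∈ (g ^ i) • D) (hj : x ∈ (g ^ j) • D) : False := by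
  obtain ⟨n, -, hun⟩ := hfd x
  exact hij ((hun i hi).trans (hun j hj).symm)

lemma tame_of_forall {w : G} (h : ∀ i : ℤ, Bdd g D ((w * g ^ i) • D)) : Tame g D w := by
  rintro B ⟨s, hBs⟩
  have hsub : w • B ⊆ ⋃ i ∈ s, (w * g ^ i) • D := by
    refine (Set.smul_set_mono hBs).trans ?_
    rw [Set.smul_set_iUnion₂]
    simp only [mul_smul]
    exact subset_rfl
  exact (bdd_finset_biUnion fun i _ => h i).mono hsub

lemma exists_wild_index {w : G} (hw : ¬ Tame g D w) :
    ∃ i : ℤ, ¬ Bdd g D ((w * g ^ i) • D) := by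
  by_contra h
  push_neg at h
  exact hw (tame_of_forall h)

lemma all_tame_of_bdd_univ (h : Bdd g D Set.univ) (w : G) : Tame g D w :=
  fun B _ => h.mono (Set.subset_univ _)

lemma mOK_mval (hax : AxialPair g D) : mOK g D 1 (mval g D 1) := by
  have hne : {m : ℕ | mOK g D 1 m}.Nonempty := by
    obtain ⟨-, -, hax3⟩ := hax
    obtain ⟨B, ⟨s, hBs⟩, hB⟩ := hax3 1
    refine ⟨s.sup fun i => i.natAbs, fun w hw => ?_⟩
    obtain ⟨n, hn⟩ := hB w hw
    have hBD : B ⊆ Dint g D (-((s.sup fun i => i.natAbs : ℕ) : ℤ)) ((s.sup fun i => i.natAbs : ℕ) : ℤ) := by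
      intro x hx
      obtain ⟨i, hi, hxi⟩ := Set.mem_iUnion₂.mp (hBs hx)
      have hle : i.natAbs ≤ s.sup fun i => i.natAbs := Finset.le_sup hi
      exact Set.mem_biUnion (by simp only [Set.mem_Icc]; omega) hxi
    refine ⟨n, Set.eq_univ_of_univ_subset ?_⟩
    rw [← hn]
    exact Set.union_subset_union (Set.smul_set_mono hBD) (Set.smul_set_mono hBD)
  exact Nat.sInf_mem hne

lemma key {M : ℕ} (hM : mOK g D 1 M) {w : G} {i : ℤ}
    (hi : ¬ Bdd g D ((w * g ^ i) • D)) :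
    ∃ n : ℤ, w • Dint g D (i - M) (i + M) ∪ Dint g D (n - M) (n + M) = Set.univ := by
  obtain ⟨n, hn⟩ := hM (w * g ^ i) (by simpa using hi)
  refine ⟨n, ?_⟩
  rw [← hn]
  congr 1
  · rw [mul_smul, pow_smul_Dint, show -(M : ℤ) + i = i - M by ring,
      show (M : ℤ) + i = i + M by ring]
  · rw [pow_smul_Dint, show -(M : ℤ) + n = n - M by ring,
      show (M : ℤ) + n = n + M by ring]

lemma diam {M : ℕ} (hfd : FundDom g D) (hM : mOK g D 1 M) {w : G} {i j : ℤ}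
    (hi : i ∈ Iset g D w) (hj : j ∈ Iset g D w) : |i - j| ≤ M := by
  by_contra h
  push_neg at h
  obtain ⟨n, hn⟩ := key hM hi
  apply hj
  refine (bdd_Dint (n - M) (n + M)).mono ?_
  intro x hx
  have hx' : x ∈ w • Dint g D (i - M) (i + M) ∪ Dint g D (n - M) (n + M) := by
    rw [hn]; trivial
  rcases hx' with hx' | hx'
  · exfalso
    rw [mul_smul] at hx
    obtain ⟨y, hy, hyx⟩ := hx
    obtain ⟨z, hz, hzx⟩ := hx'
    have hyz : y = z := smul_left_cancel w (hyx.trans hzx.symm)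
    obtain ⟨k, hk, hzk⟩ := Set.mem_iUnion₂.mp hz
    simp only [Set.mem_Icc] at hk
    have hjk : j ≠ k := by
      rcases lt_abs.mp h with h1 | h1 <;> omega
    exact fd_disj hfd hjk (hyz ▸ hy) hzk
  · exact hx'

lemma iset_nonempty {w : G} (hw : ¬ Tame g D w) : (Iset g D w).Nonempty :=
  exists_wild_index hw

lemma ic_window {M : ℕ} (hfd : FundDom g D) (hM : mOK g D 1 M) {w : G}
    (hw : ¬ Tame g D w) : ∀ j ∈ Iset g D w, ic g D w - M ≤ j ∧ j ≤ ic g D w + M := by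
  obtain ⟨i0, hi0⟩ := iset_nonempty hw
  have hbdd : BddBelow (Iset g D w) ∧ BddAbove (Iset g D w) := by
    constructor
    · refine ⟨i0 - M, fun j hj => ?_⟩
      obtain ⟨h1, h2⟩ := abs_le.mp (diam hfd hM hi0 hj)
      omega
    · refine ⟨i0 + M, fun j hj => ?_⟩
      obtain ⟨h1, h2⟩ := abs_le.mp (diam hfd hM hi0 hj)
      omega
  have ha : sInf (Iset g D w) ∈ Iset g D w := Int.csInf_mem ⟨i0, hi0⟩ hbdd.1
  have hb : sSup (Iset g D w) ∈ Iset g D w := Int.csSup_mem ⟨i0, hi0⟩ hbdd.2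
  have hab := diam hfd hM ha hb
  intro j hj
  have h1 : sInf (Iset g D w) ≤ j := csInf_le hbdd.1 hj
  have h2 : j ≤ sSup (Iset g D w) := le_csSup hbdd.2 hj
  have hic : ic g D w = (sInf (Iset g D w) + sSup (Iset g D w)) / 2 := by
    rw [ic, Int.fdiv_eq_ediv_of_nonneg _ (by norm_num)]
  obtain ⟨hc1, hc2⟩ := abs_le.mp hab
  omega

lemma wild_inv {M : ℕ} (hM : mOK g D 1 M) (hXu : ¬ Bdd g D Set.univ)
    {w : G} (hw : ¬ Tame g D w) : ¬ Tame g D w⁻¹ := by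
  intro ht
  obtain ⟨i, hi⟩ := exists_wild_index hw
  obtain ⟨n, hn⟩ := key hM hi
  apply hXu
  have huniv : (Set.univ : Set X) =
      Dint g D (i - M) (i + M) ∪ w⁻¹ • Dint g D (n - M) (n + M) := by
    calc (Set.univ : Set X) = w⁻¹ • (Set.univ : Set X) := by rw [Set.smul_set_univ]
    _ = w⁻¹ • (w • Dint g D (i - M) (i + M) ∪ Dint g D (n - M) (n + M)) := by rw [hn]
    _ = _ := by rw [Set.smul_set_union, inv_smul_smul]
  rw [huniv]
  exact (bdd_Dint _ _).union (ht _ (bdd_Dint _ _))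

lemma covering {M : ℕ} (hfd : FundDom g D) (hM : mOK g D 1 M)
    (hXu : ¬ Bdd g D Set.univ) {w : G} (hw : ¬ Tame g D w) :
    Set.univ ⊆ w • Dint g D (ic g D w - 2 * M) (ic g D w + 2 * M) ∪
      Dint g D (ic g D w⁻¹ - 2 * M) (ic g D w⁻¹ + 2 * M) := by
  obtain ⟨i, hi⟩ := exists_wild_index hw
  have hiw := ic_window hfd hM hw i hi
  obtain ⟨n, hn⟩ := key hM hi
  have hw' : ¬ Tame g D w⁻¹ := wild_inv hM hXu hw
  have hclaim : ∀ j ∈ Iset g D w⁻¹, n - M ≤ j ∧ j ≤ n + M := by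
    intro j hj
    by_contra hcon
    apply hj
    have hsub : (g ^ j) • D ⊆ w • Dint g D (i - M) (i + M) := by
      intro y hy
      have hy' : y ∈ w • Dint g D (i - M) (i + M) ∪ Dint g D (n - M) (n + M) := by
        rw [hn]; trivial
      rcases hy' with hy' | hy'
      · exact hy'
      · exfalso
        obtain ⟨k, hk, hyk⟩ := Set.mem_iUnion₂.mp hy'
        simp only [Set.mem_Icc] at hk
        exact fd_disj hfd (show j ≠ k by omega) hy hyk
    refine (bdd_Dint (i - M) (i + M)).mono ?_
    rw [mul_smul]
    refine (Set.smul_set_mono hsub).trans ?_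
    rw [inv_smul_smul]
  have hicw' : n - M ≤ ic g D w⁻¹ ∧ ic g D w⁻¹ ≤ n + M := by
    obtain ⟨i0, hi0⟩ := iset_nonempty hw'
    have hbl : BddBelow (Iset g D w⁻¹) := ⟨n - M, fun j hj => (hclaim j hj).1⟩
    have hbu : BddAbove (Iset g D w⁻¹) := ⟨n + M, fun j hj => (hclaim j hj).2⟩
    have ha := hclaim _ (Int.csInf_mem ⟨i0, hi0⟩ hbl)
    have hb := hclaim _ (Int.csSup_mem ⟨i0, hi0⟩ hbu)
    have hic : ic g D w⁻¹ = (sInf (Iset g D w⁻¹) + sSup (Iset g D w⁻¹)) / 2 := by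
      rw [ic, Int.fdiv_eq_ediv_of_nonneg _ (by norm_num)]
    omega
  rw [← hn]
  refine Set.union_subset_union (Set.smul_set_mono (Dint_mono ?_ ?_)) (Dint_mono ?_ ?_) <;>
    omega

end Aux

/-- Behrstock-type inequality: if `u`, `v` and `u⁻¹v` are wild then
`min {|i(u) − i(v⁻¹u)|, |i(v) − i(u⁻¹v)|} ≤ 5M`. -/
theorem behrstock_inequality {G : Type*} [Group G] {X : Type*} [MulAction G X]
    [Nonempty X] (g : G) (D : Set X) (hax : AxialPair g D)
    (u v : G) (hu : ¬ Tame g D u) (hv : ¬ Tame g D v) (huv : ¬ Tame g D (u⁻¹ * v)) :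
    min |ic g D u - ic g D (v⁻¹ * u)| |ic g D v - ic g D (u⁻¹ * v)|
      ≤ 5 * (mval g D 1 : ℤ) := by
  have hfd : FundDom g D := hax.1
  have hM : mOK g D 1 (mval g D 1) := mOK_mval hax
  set M : ℕ := mval g D 1 with hMdef
  have hXu : ¬ Bdd g D Set.univ := fun h => hu (all_tame_of_bdd_univ h u)
  by_cases h5 : |ic g D v - ic g D (u⁻¹ * v)| ≤ 5 * (M : ℤ)
  · exact min_le_of_right_le h5
  push_neg at h5
  refine min_le_of_left_le ?_
  have hvu : ¬ Tame g D (v⁻¹ * u) := by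
    have := wild_inv hM hXu huv
    rwa [mul_inv_rev, inv_inv] at this
  have hcov := covering hfd hM hXu hvu
  have hinv : (v⁻¹ * u)⁻¹ = u⁻¹ * v := by rw [mul_inv_rev, inv_inv]
  rw [hinv] at hcov
  set c := ic g D (v⁻¹ * u) with hc
  set c' := ic g D (u⁻¹ * v) with hc'
  obtain ⟨i, hi⟩ := iset_nonempty hv
  obtain ⟨hw1, hw2⟩ := ic_window hfd hM hv i hi
  have hsub : (g ^ i) • D ⊆ (v⁻¹ * u) • Dint g D (c - 2 * M) (c + 2 * M) := by
    intro y hy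
    rcases hcov (Set.mem_univ y) with hy' | hy'
    · exact hy'
    · exfalso
      obtain ⟨k, hk, hyk⟩ := Set.mem_iUnion₂.mp hy'
      simp only [Set.mem_Icc] at hk
      have hik : i ≠ k := by rcases lt_abs.mp h5 with h1 | h1 <;> omega
      exact fd_disj hfd hik hy hyk
  have hmain : ∃ k ∈ Set.Icc (c - 2 * (M : ℤ)) (c + 2 * M), k ∈ Iset g D u := by
    by_contra hcon
    push_neg at hcon
    apply hi
    have hbdd : Bdd g D (u • Dint g D (c - 2 * M) (c + 2 * M)) := by
      rw [smul_Dint]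
      refine bdd_iUnion_Icc fun k hk => ?_
      have hnk := hcon k hk
      simp only [Iset, Set.mem_setOf_eq, not_not] at hnk
      exact hnk
    refine hbdd.mono ?_
    rw [mul_smul]
    refine (Set.smul_set_mono hsub).trans ?_
    rw [smul_smul, show v * (v⁻¹ * u) = u by group]
  obtain ⟨k, hk, hku⟩ := hmain
  simp only [Set.mem_Icc] at hk
  obtain ⟨hk1, hk2⟩ := ic_window hfd hM hu k hku
  rw [abs_le]
  constructor <;> omega
end
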